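/- Let G be a finite group with |G| = 2⁹·3¹²·5²·7·13·41·73 and degree pattern D(G) = (3,2,3,2,2,2,2), i.e., deg_G(2)=3, deg_G(3)=2, deg_G(5)=3, deg_G(7)=2, deg_G(13)=2, deg_G(41)=2, deg_G(73)=2. Then for every solvable normal subgroup K of G, the prime 73 does not divide |K|. -/

import Mathlib

open scoped MatrixGroups

/-- Two distinct primes `p` and `q` dividing `|G|` are adjacent in the prime graph `Γ(G)`
of a finite group `G` iff `G` has an element of order `p * q`. -/
def primeGraphAdj (G : Type*) [Group G] (p q : ℕ) : Prop :=
  p ≠ q ∧ p.Prime ∧ q.Prime ∧ p ∣ Nat.card G ∧ q ∣ Nat.card G ∧ ∃ g : G, orderOf g = p * q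

open scoped Classical in
/-- The degree of a vertex `p` in the prime graph of `G`: the number of primes dividing `|G|`
that are adjacent to `p`. -/
noncomputable def primeGraphDeg (G : Type*) [Group G] (p : ℕ) : ℕ :=
  ((Nat.card G).primeFactors.filter (fun r => primeGraphAdj G p r)).card

/-!
Let `K` be a solvable normal subgroup with `73 ∣ |K|`. As `73 ∥ |G|`, a Sylow `73`-subgroup `T`
of `K` has order `73`, and the Frattini argument `N_G(T) K = G` gives
`|G| = |N_G(T)| · n₇₃(K)`.

In a solvable group `H`, every prime `r` dividing a Sylow number `n_p(H)` has a power `r^a > 1`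
dividing `|H|` with `r^a ≡ 1 (mod p)` (a weak form of Hall's theorem). Induct on `|H|` through a
nontrivial normal `q`-subgroup `N`: `n_p(H) = n_p(H/N) · |N_H(PN) : N_H(P)|`, and by Frattini in
`N_H(PN)` the second factor is a Sylow number dividing `|PN|`, hence a power of `q` that is
`≡ 1 (mod p)`.

For `r = 5, 7, 13, 41` no power `r^a > 1` dividing `|G|` is `≡ 1 (mod 73)`, so `r ∣ |N_G(T)|`.
An element of order `r` in `N_G(T)` centralizes `T` because `r ∤ 72 = |Aut T|`, which produces an
element of order `73 r`. Thus `73` has degree at least `4` in the prime graph.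
-/

namespace Subgroup

variable {G : Type*} [Group G]

theorem index_eq_relIndex_of_sup_eq_top {A B : Subgroup G} [B.Normal] [B.FiniteIndex]
    (h : A ⊔ B = ⊤) : A.index = A.relIndex B := by
  have hA := relIndex_mul_index (inf_le_left : A ⊓ B ≤ A)
  have hB := relIndex_mul_index (inf_le_right : A ⊓ B ≤ B)
  rw [inf_relIndex_left, ← relIndex_sup_right, h, relIndex_top_right] at hA
  rw [inf_relIndex_right] at hB
  exact Nat.eq_of_mul_eq_mul_left (Nat.pos_of_ne_zero FiniteIndex.index_ne_zero)
    (hA.trans (hB.symm.trans (mul_comm _ _)))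

theorem card_sup_dvd_card_mul_card (H N : Subgroup G) [N.Normal] :
    Nat.card ↥(H ⊔ N) ∣ Nat.card H * Nat.card N := by
  rw [← (N.subgroupOf (H ⊔ N)).card_mul_index,
    Nat.card_congr (subgroupOfEquivOfLe le_sup_right).toEquiv, mul_comm]
  exact mul_dvd_mul_right ((relIndex_sup_right H N).dvd.trans (relIndex_dvd_card N H)) _

theorem mem_centralizer_of_coprime_card_mulAut {T : Subgroup G} {g : G}
    (hg : g ∈ normalizer (T : Set G)) (hcop : (orderOf g).Coprime (Nat.card (MulAut T))) :
    g ∈ centralizer (T : Set G) := by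
  let g' : normalizer (T : Set G) := ⟨g, hg⟩
  have hker : g' ∈ T.normalizerMonoidHom.ker := by
    rw [MonoidHom.mem_ker, ← orderOf_eq_one_iff]
    refine Nat.eq_one_of_dvd_coprimes hcop ?_ (_root_.orderOf_dvd_natCard _)
    exact (orderOf_map_dvd _ _).trans (orderOf_submonoid g').symm.dvd
  rw [normalizerMonoidHom_ker] at hker
  exact hker

end Subgroup

namespace Sylow

open Subgroup

variable {G : Type*} [Group G] [Finite G] {p : ℕ} [Fact p.Prime]

theorem card_eq_relIndex_normalizer (P : Sylow p G) {M : Subgroup G}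
    (hPM : (P : Subgroup G) ≤ M) :
    Nat.card (Sylow p M) = (normalizer (P : Subgroup G)).relIndex M := by
  rw [card_eq_index_normalizer (P.subtype hPM), ← Sylow.coe_coe, coe_subtype,
    ← subgroupOf_normalizer_eq hPM]
  rfl

theorem relIndex_normalizer_modEq_one (P : Sylow p G) {M : Subgroup G}
    (hPM : (P : Subgroup G) ≤ M) : (normalizer (P : Subgroup G)).relIndex M ≡ 1 [MOD p] :=
  P.card_eq_relIndex_normalizer hPM ▸ card_sylow_modEq_one p M

theorem relIndex_normalizer_dvd_card (P : Sylow p G) {L : Subgroup G}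
    (hPL : (P : Subgroup G) ≤ L) :
    (normalizer (P : Subgroup G)).relIndex (normalizer (L : Set G)) ∣ Nat.card L := by
  set M := normalizer (L : Set G)
  have hLM : L ≤ M := le_normalizer
  have : (L.subgroupOf M).Normal := normal_in_normalizer
  have hfrattini := normalizer_sup_eq_top' (P.subtype (hPL.trans hLM)) (N := L.subgroupOf M)
    (by rw [coe_subtype]; exact comap_mono hPL)
  rw [← Sylow.coe_coe, coe_subtype, ← subgroupOf_normalizer_eq (hPL.trans hLM)] at hfrattini
  rw [← Nat.card_congr (subgroupOfEquivOfLe hLM).toEquiv]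
  exact (index_eq_relIndex_of_sup_eq_top hfrattini).dvd.trans (relIndex_dvd_card _ _)

theorem card_eq_card_quotient_mul_relIndex (P : Sylow p G) (N : Subgroup G) [N.Normal] :
    Nat.card (Sylow p G) = Nat.card (Sylow p (G ⧸ N)) *
      (normalizer (P : Subgroup G)).relIndex (normalizer ((P ⊔ N : Subgroup G) : Set G)) := by
  have hsurj := QuotientGroup.mk'_surjective N
  rw [card_eq_index_normalizer P, ← P.coe_coe,
    ← relIndex_mul_index (normalizer_le_normalizer_sup_normal (K := N)), mul_comm,
    card_eq_index_normalizer (P.mapSurjective hsurj),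
    ← index_comap_of_surjective _ hsurj, ← Sylow.coe_coe, coe_mapSurjective,
    comap_normalizer_eq_of_surjective _ hsurj, comap_map_eq, QuotientGroup.ker_mk']

theorem exists_relIndex_normalizer_sup_eq_pow (P : Sylow p G) {q : ℕ} (hq : q.Prime)
    {N : Subgroup G} [N.Normal] (hN : IsPGroup q N) :
    ∃ b, (normalizer (P : Subgroup G)).relIndex (normalizer ((P ⊔ N : Subgroup G) : Set G)) =
      q ^ b := by
  have := Fact.mk hq
  obtain ⟨e, he⟩ := P.2.exists_card_eq
  obtain ⟨f, hf⟩ := hN.exists_card_eq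
  set t := (normalizer (P : Subgroup G)).relIndex (normalizer ((P ⊔ N : Subgroup G) : Set G))
  have hcop : t.Coprime (p ^ e) := by
    refine Nat.Coprime.pow_right _ ?_
    rw [Nat.Coprime, (P.relIndex_normalizer_modEq_one (le_sup_left.trans le_normalizer)).gcd_eq]
    exact Nat.gcd_one_left p
  have hdvd : t ∣ p ^ e * q ^ f := he ▸ hf ▸
    (P.relIndex_normalizer_dvd_card le_sup_left).trans (card_sup_dvd_card_mul_card _ N)
  obtain ⟨b, -, hb⟩ := (Nat.dvd_prime_pow hq).mp (hcop.dvd_of_dvd_mul_left hdvd)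
  exact ⟨b, hb⟩

theorem index_normalizer_map_subtype {K : Subgroup G} [K.Normal]
    (P : Sylow p K) : (normalizer ((P : Subgroup K).map K.subtype : Set G)).index =
      Nat.card (Sylow p K) := by
  rw [index_eq_relIndex_of_sup_eq_top P.normalizer_sup_eq_top, P.card_eq_index_normalizer,
    relIndex, subgroupOf_normalizer_eq (map_subtype_le _), subgroupOf,
    comap_map_eq_self_of_injective K.subtype_injective]
  rfl

end Sylow

namespace Group.IsSolvable

open Subgroup

variable {G : Type*} [Group G]

theorem exists_normal_ne_bot_isMulCommutative [Group.IsSolvable G] [Nontrivial G] :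
    ∃ A : Subgroup G, A.Normal ∧ A ≠ ⊥ ∧ IsMulCommutative A := by
  classical
  obtain ⟨n, hn⟩ := Group.IsSolvable.solvable (G := G)
  have hex : ∃ m, derivedSeries G (m + 1) = ⊥ :=
    ⟨n, le_bot_iff.mp ((derivedSeries_antitone G n.le_succ).trans hn.le)⟩
  refine ⟨derivedSeries G (Nat.find hex), derivedSeries_normal G _, ?_, ?_⟩
  · rcases hm : Nat.find hex with _ | k
    · rw [derivedSeries_zero]
      exact top_ne_bot
    · exact Nat.find_min hex (hm ▸ k.lt_succ_self)
  · rw [← commutator_self_eq_bot_iff, ← derivedSeries_succ]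
    exact Nat.find_spec hex

theorem exists_isPGroup_normal_ne_bot [Finite G] [Group.IsSolvable G] [Nontrivial G] :
    ∃ q, q.Prime ∧ ∃ N : Subgroup G, N.Normal ∧ N ≠ ⊥ ∧ IsPGroup q N := by
  obtain ⟨A, hA, hA_ne, hA_comm⟩ := exists_normal_ne_bot_isMulCommutative (G := G)
  have : Nontrivial A := (nontrivial_iff_ne_bot A).mpr hA_ne
  set q := (Nat.card A).minFac
  have hq : q.Prime := Nat.minFac_prime Finite.one_lt_card.ne'
  have : Fact q.Prime := ⟨hq⟩
  let S : Sylow q A := default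
  have : (S : Subgroup A).Characteristic := S.characteristic_of_normal inferInstance
  refine ⟨q, hq, (S : Subgroup A).map A.subtype, inferInstance, ?_, S.2.map _⟩
  rw [Ne, map_eq_bot_iff_of_injective _ A.subtype_injective]
  exact S.ne_bot_of_dvd_card (Nat.minFac_dvd _)

theorem exists_pow_dvd_card_modEq_one_of_dvd_card_sylow {p r : ℕ} [Fact p.Prime] (hr : r.Prime)
    (H : Type*) [Group H] [Finite H] [Group.IsSolvable H] (hrH : r ∣ Nat.card (Sylow p H)) :
    ∃ a, 0 < a ∧ r ^ a ∣ Nat.card H ∧ r ^ a ≡ 1 [MOD p] := by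
  obtain ⟨n, hn⟩ : ∃ n, Nat.card H = n := ⟨_, rfl⟩
  induction n using Nat.strong_induction_on generalizing H with
  | _ n ih =>
    have : Nontrivial H := by
      have hr_dvd : r ∣ Nat.card H :=
        hrH.trans ((default : Sylow p H).card_eq_index_normalizer ▸ index_dvd_card _)
      refine Finite.one_lt_card_iff_nontrivial.mp (lt_of_le_of_ne Nat.card_pos fun h ↦ ?_)
      exact hr.ne_one (Nat.dvd_one.mp (h ▸ hr_dvd))
    obtain ⟨q, hq, N, hN, hN_ne, hNq⟩ := exists_isPGroup_normal_ne_bot (G := H)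
    let P : Sylow p H := default
    rw [P.card_eq_card_quotient_mul_relIndex N] at hrH
    rcases (Nat.Prime.dvd_mul hr).mp hrH with hquot | hlocal
    · have hlt : Nat.card (H ⧸ N) < n := by
        rw [← hn, card_eq_card_quotient_mul_card_subgroup N]
        exact lt_mul_right Nat.card_pos ((one_lt_card_iff_ne_bot N).mpr hN_ne)
      obtain ⟨a, ha, hdvd, hmod⟩ := ih _ hlt (H ⧸ N) hquot rfl
      exact ⟨a, ha, hdvd.trans (card_quotient_dvd_card N), hmod⟩
    · obtain ⟨b, hb⟩ := P.exists_relIndex_normalizer_sup_eq_pow hq hNq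
      rw [hb] at hlocal
      have hrq : r = q := (Nat.prime_dvd_prime_iff_eq hr hq).mp (hr.dvd_of_dvd_pow hlocal)
      subst hrq
      refine ⟨b, Nat.pos_of_ne_zero ?_, ?_, ?_⟩
      · rintro rfl
        exact hr.ne_one (Nat.dvd_one.mp hlocal)
      · rw [← hb]
        exact (relIndex_dvd_card _ _).trans (card_subgroup_dvd_card _)
      · rw [← hb]
        exact P.relIndex_normalizer_modEq_one (le_sup_left.trans le_normalizer)

end Group.IsSolvable

section

open Subgroup

variable {G : Type*} [Group G] [Finite G]

theorem exists_orderOf_eq_mul_of_dvd_card_normalizer {T : Subgroup G} {p r : ℕ} (hp : p.Prime)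
    (hr : r.Prime) (hT : Nat.card T = p) (hrp : r ≠ p) (hr_dvd : ¬ r ∣ p - 1)
    (hrN : r ∣ Nat.card (normalizer (T : Set G))) : ∃ g : G, orderOf g = p * r := by
  have := Fact.mk hp
  have := Fact.mk hr
  have : IsCyclic T := isCyclic_of_prime_card hT
  obtain ⟨g, hg⟩ := exists_prime_orderOf_dvd_card' r hrN
  obtain ⟨x, hx⟩ := exists_prime_orderOf_dvd_card' p hT.symm.dvd
  rw [← Subgroup.orderOf_coe] at hg hx
  have hcent : (g : G) ∈ centralizer (T : Set G) := by
    refine mem_centralizer_of_coprime_card_mulAut g.2 ?_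
    rw [hg, IsCyclic.card_mulAut, hT, Nat.totient_prime hp]
    exact (Nat.Prime.coprime_iff_not_dvd hr).mpr hr_dvd
  have hcomm : Commute (x : G) g := mem_centralizer_iff.mp hcent x x.2
  have hcop : (orderOf (x : G)).Coprime (orderOf (g : G)) := by
    rw [hx, hg]
    exact (Nat.coprime_primes hp hr).mpr hrp.symm
  exact ⟨x * g, by rw [hcomm.orderOf_mul_eq_mul_orderOf_of_coprime hcop, hx, hg]⟩

theorem exists_orderOf_eq_mul_of_dvd_card_normal_isSolvable {p r : ℕ} [Fact p.Prime]
    (hr : r.Prime) (K : Subgroup G) [K.Normal] [Group.IsSolvable K] (hpK : p ∣ Nat.card K)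
    (hpK2 : ¬ p ^ 2 ∣ Nat.card K) (hrG : r ∣ Nat.card G) (hrp : r ≠ p)
    (hr_dvd : ¬ r ∣ p - 1)
    (hpow : ∀ a, 0 < a → r ^ a ∣ Nat.card K → ¬ r ^ a ≡ 1 [MOD p]) :
    ∃ g : G, orderOf g = p * r := by
  let P : Sylow p K := default
  have hP : Nat.card P = p := by
    obtain ⟨e, he⟩ := P.2.exists_card_eq
    have hp := (Fact.out : p.Prime).one_lt
    have h1 : 1 ≤ e := (Nat.pow_dvd_pow_iff_le_right hp).mp <| by
      rw [pow_one, ← he]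
      exact P.dvd_card_of_dvd_card hpK
    have h2 : e < 2 := lt_of_not_ge fun h ↦
      hpK2 ((Nat.pow_dvd_pow p h).trans (he ▸ card_subgroup_dvd_card _))
    rw [he, show e = 1 by omega, pow_one]
  have hrP : ¬ r ∣ Nat.card (Sylow p K) := fun h ↦ by
    obtain ⟨a, ha, hdvd, hmod⟩ :=
      Group.IsSolvable.exists_pow_dvd_card_modEq_one_of_dvd_card_sylow hr K h
    exact hpow a ha hdvd hmod
  refine exists_orderOf_eq_mul_of_dvd_card_normalizer Fact.out hr
    ((card_map_of_injective K.subtype_injective).trans hP) hrp hr_dvd ?_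
  rw [← card_mul_index, P.index_normalizer_map_subtype] at hrG
  exact (hr.dvd_mul.mp hrG).resolve_right hrP

end

section

variable {G : Type*} [Group G]

theorem primeGraphAdj_of_orderOf_eq {p q : ℕ} (hp : p.Prime) (hq : q.Prime) (hpq : p ≠ q)
    (h : ∃ g : G, orderOf g = p * q) : primeGraphAdj G p q := by
  obtain ⟨g, hg⟩ := h
  have hpq_dvd : p * q ∣ Nat.card G := hg ▸ orderOf_dvd_natCard g
  exact ⟨hpq, hp, hq, (dvd_mul_right p q).trans hpq_dvd, (dvd_mul_left q p).trans hpq_dvd,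
    g, hg⟩

theorem card_le_primeGraphDeg [Finite G] {p : ℕ} {s : Finset ℕ}
    (hs : ∀ q ∈ s, primeGraphAdj G p q) :
    s.card ≤ primeGraphDeg G p := by
  classical
  refine Finset.card_le_card fun q hq ↦ Finset.mem_filter.mpr ⟨?_, hs q hq⟩
  obtain ⟨-, -, hq_prime, -, hq_dvd, -⟩ := hs q hq
  exact Nat.mem_primeFactors.mpr ⟨hq_prime, hq_dvd, Nat.card_pos.ne'⟩

end

theorem solvable_normal_not_dvd_73_L3_81_general (G : Type*) [Group G] [Finite G]
    (hcard : Nat.card G = 2 ^ 9 * 3 ^ 12 * 5 ^ 2 * 7 * 13 * 41 * 73)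
    (hdeg73 : primeGraphDeg G 73 = 2) :
    ∀ K : Subgroup G, K.Normal → IsSolvable K → ¬ 73 ∣ Nat.card K := by
  intro K _ hK h73
  have : Group.IsSolvable K := hK
  have : Fact (Nat.Prime 73) := ⟨by norm_num⟩
  have hKG := Subgroup.card_subgroup_dvd_card K
  have hK73 : ¬ 73 ^ 2 ∣ Nat.card K := fun h ↦ by
    have := h.trans hKG
    rw [hcard] at this
    norm_num at this
  have hadj : ∀ r ∈ ({5, 7, 13, 41} : Finset ℕ), primeGraphAdj G 73 r := by
    intro r hr
    have hr_prime : r.Prime := by fin_cases hr <;> norm_num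
    refine primeGraphAdj_of_orderOf_eq (by norm_num) hr_prime (by fin_cases hr <;> norm_num) <|
      exists_orderOf_eq_mul_of_dvd_card_normal_isSolvable hr_prime K h73 hK73
        (by rw [hcard]; fin_cases hr <;> norm_num) (by fin_cases hr <;> norm_num)
        (by fin_cases hr <;> norm_num) fun a ha hdvd ↦ ?_
    have ha2 : a ≤ 2 := by
      by_contra! h
      have := (pow_dvd_pow r h).trans (hdvd.trans hKG)
      rw [hcard] at this
      fin_cases hr <;> norm_num at this
    interval_cases a <;> fin_cases hr <;> decide
  have := card_le_primeGraphDeg hadj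
  rw [hdeg73] at this
  simp at this

theorem solvable_normal_not_dvd_73_L3_81 (G : Type*) [Group G] [Finite G]
    (hcard : Nat.card G = 2 ^ 9 * 3 ^ 12 * 5 ^ 2 * 7 * 13 * 41 * 73)
    (hdeg2 : primeGraphDeg G 2 = 3) (hdeg3 : primeGraphDeg G 3 = 2)
    (hdeg5 : primeGraphDeg G 5 = 3) (hdeg7 : primeGraphDeg G 7 = 2)
    (hdeg13 : primeGraphDeg G 13 = 2) (hdeg41 : primeGraphDeg G 41 = 2)
    (hdeg73 : primeGraphDeg G 73 = 2) :
    ∀ K : Subgroup G, K.Normal → IsSolvable K → ¬ 73 ∣ Nat.card K :=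
  solvable_normal_not_dvd_73_L3_81_general G hcard hdeg73
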